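/- arXiv:1409.8599 — 6 statements merged into one kernel-verified Lean document; each statement's English description precedes it below -/
import Mathlib

section
/- Let α be a type, let a ∈ α, and let w be an element of the subgroup of FreeGroup α generated by the generators {FreeGroup.of b : b ∈ α, b ≠ a}. Define f : α → FreeGroup α by f a = (FreeGroup.of a) * w and f b = FreeGroup.of b for b ≠ a. Then the induced homomorphism FreeGroup.lift f : FreeGroup α →* FreeGroup α is bijective; that is, f is a free group basis of FreeGroup α. -/
/-!
A homomorphism out of `FreeGroup α` fixing every generator `of b` with `b ≠ a` fixes the
subgroup `H` they generate. So when `w ∈ H`, the transvection `of a ↦ of a * w` followed by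
`of a ↦ of a * v` is `of a ↦ of a * v * w`; with `v = w⁻¹` and `w⁻¹ ∈ H` this gives a two-sided
inverse.
-/

namespace FreeGroup

variable {α : Type*}

theorem apply_eq_self_of_mem_closure {φ : FreeGroup α →* FreeGroup α} {s : Set α}
    (hφ : ∀ b ∈ s, φ (of b) = of b) {w : FreeGroup α} (hw : w ∈ Subgroup.closure (of '' s)) :
    φ w = w :=
  MonoidHom.eqOn_closure (g := MonoidHom.id _) (by rintro _ ⟨b, hb, rfl⟩; exact hφ b hb) hw

variable [DecidableEq α]

def transvection (a : α) (w : FreeGroup α) : FreeGroup α →* FreeGroup α :=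
  lift (Function.update of a (of a * w))

theorem transvection_of_self (a : α) (w : FreeGroup α) : transvection a w (of a) = of a * w := by
  simp [transvection]

theorem transvection_of_of_ne {a b : α} (w : FreeGroup α) (hb : b ≠ a) :
    transvection a w (of b) = of b := by
  simp [transvection, hb]

theorem transvection_one (a : α) : transvection a 1 = MonoidHom.id (FreeGroup α) :=
  ext_hom _ _ fun b => by simp [transvection]

theorem transvection_apply_eq_self_of_mem_closure {a : α} (v : FreeGroup α) {w : FreeGroup α}
    (hw : w ∈ Subgroup.closure (of '' {b | b ≠ a})) : transvection a v w = w :=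
  apply_eq_self_of_mem_closure (fun _ hb => transvection_of_of_ne v hb) hw

theorem transvection_comp_transvection {a : α} (v : FreeGroup α) {w : FreeGroup α}
    (hw : w ∈ Subgroup.closure (of '' {b | b ≠ a})) :
    (transvection a v).comp (transvection a w) = transvection a (v * w) := by
  refine ext_hom _ _ fun b => ?_
  rcases eq_or_ne b a with rfl | hb
  · simp [transvection_of_self, transvection_apply_eq_self_of_mem_closure v hw, mul_assoc]
  · simp [transvection_of_of_ne _ hb]

theorem transvection_bijective {a : α} {w : FreeGroup α}
    (hw : w ∈ Subgroup.closure (of '' {b | b ≠ a})) : Function.Bijective (transvection a w) := by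
  have hw' := Subgroup.inv_mem _ hw
  refine Function.bijective_iff_has_inverse.2 ⟨transvection a w⁻¹, fun x => ?_, fun x => ?_⟩
  · simpa [transvection_one] using
      DFunLike.congr_fun (transvection_comp_transvection w⁻¹ hw) x
  · simpa [transvection_one] using
      DFunLike.congr_fun (transvection_comp_transvection w hw') x

end FreeGroup

/-- Replacing one generator `of a` by `of a * w`, where `w` lies in the subgroup generated
by the other generators, yields a free group basis of `FreeGroup α`. -/
theorem statement1 {α : Type*} (a : α) (w : FreeGroup α)
    (hw : w ∈ Subgroup.closure (FreeGroup.of '' {b : α | b ≠ a}))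
    (f : α → FreeGroup α)
    (hfa : f a = FreeGroup.of a * w)
    (hfb : ∀ b : α, b ≠ a → f b = FreeGroup.of b) :
    Function.Bijective ⇑(FreeGroup.lift f : FreeGroup α →* FreeGroup α) := by
  classical
  obtain rfl : f = Function.update FreeGroup.of a (FreeGroup.of a * w) := by
    funext b
    rcases eq_or_ne b a with rfl | hb
    · simp [hfa]
    · simp [hb, hfb b hb]
  exact FreeGroup.transvection_bijective hw
end

section
/- In the free group F_5 with free generators e_1, …, e_5, the intersection of the subgroup generated by {e_1, e_2, e_3} with the subgroup generated by {e_1, e_2, e_3·⁅e_4,e_5⁆} equals the subgroup generated by {e_1, e_2}: Subgroup.closure {e_1,e_2,e_3} ⊓ Subgroup.closure {e_1,e_2, e_3·⁅e_4,e_5⁆} = Subgroup.closure {e_1,e_2}. -/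
/-!
The subgroup `⟨e₁, e₂, e₃⁅e₄, e₅⁆⟩` is the image of `F₃` under the substitution
`e₃ ↦ e₃ e₄ e₅ e₄⁻¹ e₅⁻¹`. Substituting into a reduced word causes no cancellation, so the
reduced word of the image of `u` is obtained from that of `u` letter by letter. If `u` involves
`e₃`, this word contains `e₄`, whereas `⟨e₁, e₂, e₃⟩` consists exactly of the elements whose reduced
words only use `e₁, e₂, e₃`.
-/

open scoped commutatorElement

namespace FreeGroup

variable {α β : Type*}

def substLetter (w : α → List (β × Bool)) (x : α × Bool) : List (β × Bool) :=
  bif x.2 then w x.1 else invRev (w x.1)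

structure IsCancellationFree (w : α → List (β × Bool)) : Prop where
  ne_nil : ∀ x, substLetter w x ≠ []
  isReduced : ∀ x, IsReduced (substLetter w x)
  junction : ∀ x y : α × Bool, (x.1 = y.1 → x.2 = y.2) →
    ∀ p ∈ (substLetter w x).getLast?, ∀ q ∈ (substLetter w y).head?, p.1 = q.1 → p.2 = q.2

theorem lift_mk_eq_mk_flatMap_substLetter (w : α → List (β × Bool)) (L : List (α × Bool)) :
    lift (fun a => mk (w a)) (mk L) = mk (L.flatMap (substLetter w)) := by
  induction L with
  | nil => rfl
  | cons x L ih =>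
    rw [List.flatMap_cons, ← mul_mk, ← ih, ← List.singleton_append, ← mul_mk,
      MonoidHom.map_mul]
    obtain ⟨a, _ | _⟩ := x <;> simp [substLetter, ← inv_mk]

theorem IsReduced.flatMap_substLetter {w : α → List (β × Bool)} (hw : IsCancellationFree w)
    {L : List (α × Bool)} (hL : IsReduced L) : IsReduced (L.flatMap (substLetter w)) := by
  have hnil : [] ∉ L.map (substLetter w) := fun h =>
    let ⟨x, _, hx⟩ := List.mem_map.mp h
    hw.ne_nil x hx
  rw [IsReduced, List.flatMap_def, List.isChain_flatten hnil, List.isChain_map]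
  exact ⟨List.forall_mem_map.mpr fun x _ => hw.isReduced x, hL.imp hw.junction⟩

theorem toWord_lift_mk [DecidableEq α] [DecidableEq β] {w : α → List (β × Bool)}
    (hw : IsCancellationFree w) (u : FreeGroup α) :
    (lift (fun a => mk (w a)) u).toWord = u.toWord.flatMap (substLetter w) := by
  conv_lhs => rw [← mk_toWord (x := u)]
  rw [lift_mk_eq_mk_flatMap_substLetter, toWord_mk,
    (isReduced_toWord.flatMap_substLetter hw).reduce_eq]

theorem mem_closure_image_of_iff [DecidableEq α] {S : Set α} {x : FreeGroup α} :
    x ∈ Subgroup.closure (of '' S) ↔ ∀ p ∈ x.toWord, p.1 ∈ S := by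
  constructor
  · intro hx
    induction hx using Subgroup.closure_induction with
    | mem _ hg =>
      obtain ⟨a, ha, rfl⟩ := hg
      simpa using ha
    | one => simp
    | mul x y _ _ hx hy =>
      intro p hp
      exact (List.mem_append.mp ((toWord_mul_sublist x y).mem hp)).elim (hx p) (hy p)
    | inv x _ hx =>
      intro p hp
      rw [toWord_inv, invRev, List.mem_reverse, List.mem_map] at hp
      obtain ⟨q, hq, rfl⟩ := hp
      exact hx q hq
  · intro h
    rw [← mk_toWord (x := x), ← lift_of_apply (mk _), lift_mk]
    refine Subgroup.list_prod_mem _ (List.forall_mem_map.mpr ?_)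
    rintro ⟨a, b⟩ hp
    have ha : of a ∈ Subgroup.closure (of '' S) := Subgroup.subset_closure ⟨a, h _ hp, rfl⟩
    cases b
    · exact inv_mem ha
    · exact ha

end FreeGroup

open FreeGroup

def commutatorTwistWord : Fin 3 → List (Fin 5 × Bool) :=
  ![[(0, true)], [(1, true)], [(2, true), (3, true), (4, true), (3, false), (4, false)]]

def commutatorTwist : FreeGroup (Fin 3) →* FreeGroup (Fin 5) :=
  lift ![of 0, of 1, of 2 * ⁅(of 3 : FreeGroup (Fin 5)), of 4⁆]

theorem commutatorTwist_eq_lift_mk :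
    commutatorTwist = lift fun a => mk (commutatorTwistWord a) := by
  ext a
  fin_cases a <;> decide

theorem isCancellationFree_commutatorTwistWord : IsCancellationFree commutatorTwistWord :=
  ⟨by decide, by unfold FreeGroup.IsReduced; decide, by decide⟩

theorem range_commutatorTwist : commutatorTwist.range =
    Subgroup.closure {of 0, of 1, of 2 * ⁅(of 3 : FreeGroup (Fin 5)), of 4⁆} := by
  rw [commutatorTwist, range_lift_eq_closure]
  simp only [Matrix.range_cons, Matrix.range_empty, Set.union_empty, Set.singleton_union]

theorem image_commutatorTwist_of_zero_one :
    commutatorTwist '' (of '' {0, 1}) = {of 0, of 1} := by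
  simp [Set.image_insert_eq, commutatorTwist]

theorem mem_closure_of_commutatorTwist_mem {u : FreeGroup (Fin 3)}
    (hu : commutatorTwist u ∈ Subgroup.closure (of '' {0, 1, 2})) :
    u ∈ Subgroup.closure (of '' {0, 1}) := by
  rw [mem_closure_image_of_iff, commutatorTwist_eq_lift_mk,
    toWord_lift_mk isCancellationFree_commutatorTwistWord] at hu
  rw [mem_closure_image_of_iff]
  rintro ⟨a, b⟩ hp
  fin_cases a
  · simp
  · simp
  · have h3 : ((3 : Fin 5), true) ∈ substLetter commutatorTwistWord (2, b) := by
      cases b <;> decide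
    have := hu _ (List.mem_flatMap.mpr ⟨_, hp, h3⟩)
    simp at this

/-- In the free group `F₅`,
`⟨e₁,e₂,e₃⟩ ⊓ ⟨e₁,e₂,e₃·⁅e₄,e₅⁆⟩ = ⟨e₁,e₂⟩`. -/
theorem statement4 :
    Subgroup.closure ({FreeGroup.of 0, FreeGroup.of 1, FreeGroup.of 2} : Set (FreeGroup (Fin 5))) ⊓
      Subgroup.closure ({FreeGroup.of 0, FreeGroup.of 1,
        FreeGroup.of 2 * ⁅(FreeGroup.of 3 : FreeGroup (Fin 5)), FreeGroup.of 4⁆} :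
          Set (FreeGroup (Fin 5))) =
    Subgroup.closure ({FreeGroup.of 0, FreeGroup.of 1} : Set (FreeGroup (Fin 5))) := by
  refine le_antisymm ?_ (le_inf (Subgroup.closure_mono ?_) (Subgroup.closure_mono ?_))
  · rintro x ⟨hxH, hxK⟩
    obtain ⟨u, rfl⟩ : x ∈ commutatorTwist.range := range_commutatorTwist ▸ hxK
    have hu := mem_closure_of_commutatorTwist_mem (by simpa [Set.image_insert_eq] using hxH)
    simpa [← image_commutatorTwist_of_zero_one, ← MonoidHom.map_closure] using
      Subgroup.mem_map_of_mem commutatorTwist hu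
  · simp [Set.insert_subset_iff]
  · simp [Set.insert_subset_iff]
end

section
/- Fix i ∈ ℕ and work in the free group F_{2i+7} with free generators e_1, …, e_{2i+7}. Let A := Subgroup.closure ({e_1,e_2,e_3} ∪ {⁅e_{2j+2},e_{2j+3}⁆ : 1 ≤ j ≤ i+1}), let B := Subgroup.closure ({e_1,e_2,e_3} ∪ {⁅e_{2j+2},e_{2j+3}⁆ : 1 ≤ j ≤ i} ∪ {⁅e_{2i+4},e_{2i+5}⁆·⁅e_{2i+6},e_{2i+7}⁆}), and let C := Subgroup.closure ({e_1,e_2,e_3} ∪ {⁅e_{2j+2},e_{2j+3}⁆ : 1 ≤ j ≤ i}). Then A ⊓ B = C. -/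
open scoped commutatorElement

/-!
If `ρ` fixes `S` and `x` but kills `y`, while `π` fixes `S`, kills `x` and sends `y` to `x`,
then `ρ` is the identity on `⟨S, x⟩` and agrees with `π` on `⟨S, x * y⟩`. An element `g` of the
intersection therefore satisfies `g = ρ g = π g`, and `π` maps `⟨S, x⟩` into `⟨S⟩`.

In the free group, with `x = ⁅e_{2i+4}, e_{2i+5}⁆` and `y = ⁅e_{2i+6}, e_{2i+7}⁆`, take `ρ` to
kill `e_{2i+6}, e_{2i+7}`, and `π` to kill `e_{2i+4}, e_{2i+5}` and shift `e_{2i+6}, e_{2i+7}`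
down to them.
-/

namespace Subgroup

variable {G : Type*} [Group G]

theorem closure_insert_inf_closure_insert_mul_eq {S : Set G} {x y : G} (ρ π : G →* G)
    (hρS : ∀ s ∈ S, ρ s = s) (hπS : ∀ s ∈ S, π s = s) (hρx : ρ x = x) (hρy : ρ y = 1)
    (hπx : π x = 1) (hπy : π y = x) :
    closure (insert x S) ⊓ closure (insert (x * y) S) = closure S := by
  refine le_antisymm ?_ <| le_inf (closure_mono (Set.subset_insert _ _))
    (closure_mono (Set.subset_insert _ _))
  rintro g ⟨hgA, hgB⟩
  have hρg : ρ g = MonoidHom.id G g := by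
    refine MonoidHom.eqOn_closure ?_ hgA
    rintro s (rfl | hs)
    exacts [hρx, hρS s hs]
  have hπg : π g = ρ g := by
    refine MonoidHom.eqOn_closure ?_ hgB
    rintro s (rfl | hs)
    · simp [hρx, hρy, hπx, hπy]
    · rw [hπS s hs, hρS s hs]
  have hπA : closure (insert x S) ≤ (closure S).comap π := by
    rw [closure_le]
    rintro s (rfl | hs)
    · simp [hπx]
    · simpa [hπS s hs] using subset_closure hs
  rw [← MonoidHom.id_apply G g, ← hρg, ← hπg]
  exact hπA hgA

end Subgroup

namespace FreeGroup

variable {X : Type*} [DecidableEq X]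

theorem closure_insert_commutator_inf_closure_insert_commutator_mul_eq {a b c d : X}
    (hac : a ≠ c) (had : a ≠ d) (hbc : b ≠ c) (hbd : b ≠ d) (hcd : c ≠ d)
    {S : Set (FreeGroup X)} (hS : S ⊆ Subgroup.closure (of '' ({a, b, c, d} : Set X)ᶜ)) :
    Subgroup.closure (insert ⁅of a, of b⁆ S) ⊓
        Subgroup.closure (insert (⁅of a, of b⁆ * ⁅of c, of d⁆) S) =
      Subgroup.closure S := by
  have fixes_S (φ : FreeGroup X →* FreeGroup X)
      (hφ : ∀ t ∉ ({a, b, c, d} : Set X), φ (of t) = of t) (s : FreeGroup X) (hs : s ∈ S) :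
      φ s = s := by
    refine MonoidHom.eqOn_closure (f := φ) (g := MonoidHom.id _) ?_ (hS hs)
    rintro _ ⟨t, ht, rfl⟩
    exact hφ t ht
  apply Subgroup.closure_insert_inf_closure_insert_mul_eq
    (lift fun t => if t = c ∨ t = d then 1 else of t)
    (lift fun t => if t = a ∨ t = b then 1 else if t = c then of a else if t = d then of b
      else of t)
  · exact fixes_S _ fun t ht => by simp_all
  · exact fixes_S _ fun t ht => by simp_all
  all_goals simp [hac, had, hbc, hbd, hcd, hac.symm, had.symm, hbc.symm, hbd.symm, hcd.symm]

end FreeGroup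

/-- In `F_{2i+7}`, with
`A = ⟨e₁,e₂,e₃,⁅e₄,e₅⁆,…,⁅e_{2i+4},e_{2i+5}⁆⟩`,
`B = ⟨e₁,e₂,e₃,⁅e₄,e₅⁆,…,⁅e_{2i+2},e_{2i+3}⁆,⁅e_{2i+4},e_{2i+5}⁆·⁅e_{2i+6},e_{2i+7}⁆⟩` and
`C = ⟨e₁,e₂,e₃,⁅e₄,e₅⁆,…,⁅e_{2i+2},e_{2i+3}⁆⟩`, we have `A ⊓ B = C`. -/
theorem statement5 (i : ℕ)
    (e : ℕ → FreeGroup (Fin (2 * i + 7)))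
    (he : ∀ m (_ : 1 ≤ m) (_ : m ≤ 2 * i + 7), e m = FreeGroup.of ⟨m - 1, by omega⟩) :
    Subgroup.closure
        ({e 1, e 2, e 3} ∪ (fun j => ⁅e (2 * j + 2), e (2 * j + 3)⁆) '' Set.Icc 1 (i + 1)) ⊓
      Subgroup.closure
        ({e 1, e 2, e 3} ∪ (fun j => ⁅e (2 * j + 2), e (2 * j + 3)⁆) '' Set.Icc 1 i ∪
          {⁅e (2 * i + 4), e (2 * i + 5)⁆ * ⁅e (2 * i + 6), e (2 * i + 7)⁆}) =
    Subgroup.closure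
      ({e 1, e 2, e 3} ∪ (fun j => ⁅e (2 * j + 2), e (2 * j + 3)⁆) '' Set.Icc 1 i) := by
  have he_mem (m : ℕ) (h1 : 1 ≤ m) (h2 : m ≤ 2 * i + 3) : e m ∈ Subgroup.closure
      (FreeGroup.of '' ({⟨2 * i + 3, by omega⟩, ⟨2 * i + 4, by omega⟩, ⟨2 * i + 5, by omega⟩,
        ⟨2 * i + 6, by omega⟩} : Set (Fin (2 * i + 7)))ᶜ) := by
    refine Subgroup.subset_closure ⟨_, ?_, (he m h1 (by omega)).symm⟩
    simp only [Set.mem_compl_iff, Set.mem_insert_iff, Set.mem_singleton_iff, Fin.ext_iff]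
    omega
  rw [← Set.insert_Icc_right_eq_Icc_add_one (by omega), Set.image_insert_eq, Set.union_insert,
    Set.union_singleton, show 2 * (i + 1) + 2 = 2 * i + 4 by ring,
    show 2 * (i + 1) + 3 = 2 * i + 5 by ring, he (2 * i + 4) (by omega) (by omega),
    he (2 * i + 5) (by omega) (by omega), he (2 * i + 6) (by omega) (by omega),
    he (2 * i + 7) (by omega) (by omega)]
  simp only [Nat.reduceSubDiff]
  refine FreeGroup.closure_insert_commutator_inf_closure_insert_commutator_mul_eq
    (by simp) (by simp) (by simp) (by simp) (by simp) ?_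
  rintro s ((rfl | rfl | rfl) | ⟨j, ⟨hj1, hj2⟩, rfl⟩)
  · exact he_mem 1 (by omega) (by omega)
  · exact he_mem 2 (by omega) (by omega)
  · exact he_mem 3 (by omega) (by omega)
  · have hx := he_mem (2 * j + 2) (by omega) (by omega)
    have hy := he_mem (2 * j + 3) (by omega) (by omega)
    simp only [commutatorElement_def]
    exact mul_mem (mul_mem (mul_mem hx hy) (inv_mem hx)) (inv_mem hy)
end

section
/- Fix i ∈ ℕ and work in the free group F_{2i+5} with free generators e_1, …, e_{2i+5}. Let A := Subgroup.closure ({e_1,e_2,e_3} ∪ {⁅e_{2j+2},e_{2j+3}⁆ : 1 ≤ j ≤ i+1}). Then A is root-closed in F_{2i+5}: for every g ∈ F_{2i+5} and every integer m ≠ 0, if g^m ∈ A then g ∈ A. -/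
/-!
Each generator of `A` is spelled by a short reduced word, a *piece*: `e₁, e₂, e₃` and
`e₄e₅e₄⁻¹e₅⁻¹, …`. Two pieces never cancel against each other unless one is the inverse of the
other, so the reduced word of any element of `A` is the concatenation of the pieces of a reduced
word in the generators. The cuts between pieces are visible locally: a position between two
letters is a cut exactly when the letter before it is one of `e₁, e₂, e₃` or an inverse
letter and the letter after it is one of `e₁, e₂, e₃` or a positive letter. Consequently, cutting
the reduced word of an element of `A` at such a position gives a prefix that again lies in `A`.

Now write `g = c t c⁻¹` with `t` cyclically reduced, so that the reduced word of `gⁿ` is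
`c tⁿ c⁻¹`. Pieces have length at most `4`, so for large `n` there is a cut inside the
periodic part `tⁿ`, and by periodicity a second one `|t|` letters further. The prefixes of `gⁿ`
ending at these two cuts lie in `A`, and the second is `g` times the first.
-/

open scoped commutatorElement

namespace List

variable {β γ : Type*} {word : β → List γ} {R : γ → γ → Prop}

theorem exists_flatMap_eq_of_rel (hin : ∀ p, (word p).IsChain (fun a b => ¬ R a b))
    {L : List β} {L₁ L₂ : List γ} {a b : γ} (h : L.flatMap word = L₁ ++ a :: b :: L₂)
    (hab : R a b) : ∃ L' : List β, L₁ ++ [a] = L'.flatMap word := by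
  induction L generalizing L₁ with
  | nil => simp at h
  | cons p L ih =>
    rw [flatMap_cons] at h
    obtain ⟨as, rfl, h'⟩ | ⟨bs, hp, h'⟩ := append_eq_append_iff.mp h
    · obtain ⟨L', hL'⟩ := ih h'
      exact ⟨p :: L', by simp [hL']⟩
    rcases bs with _ | ⟨x, _ | ⟨y, r⟩⟩
    · obtain ⟨L', hL'⟩ := ih (L₁ := []) (by simpa using h'.symm)
      exact ⟨p :: L', by simp [hp, ← hL']⟩
    · obtain ⟨rfl, -⟩ := cons_eq_cons.mp h'
      exact ⟨[p], by simp [hp]⟩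
    · simp only [cons_append, cons.injEq] at h'
      obtain ⟨rfl, rfl, -⟩ := h'
      exact absurd hab (isChain_iff_forall_rel_of_append_cons_cons.mp (hin p) hp)

theorem exists_rel_of_flatMap_eq_append {N : ℕ} (hne : ∀ p, word p ≠ [])
    (hlen : ∀ p, (word p).length ≤ N)
    (hbd : ∀ p q, ∀ a ∈ (word p).getLast?, ∀ b ∈ (word q).head?, R a b)
    {L : List β} {L₁ L₂ L₃ : List γ} (h : L.flatMap word = L₁ ++ L₂ ++ L₃)
    (hN : N < L₂.length) : ∃ M₁ a b M₂, L₂ = M₁ ++ a :: b :: M₂ ∧ R a b := by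
  induction L generalizing L₁ with
  | nil =>
    obtain ⟨-, rfl, -⟩ : L₁ = [] ∧ L₂ = [] ∧ L₃ = [] := by simpa using h.symm
    simp at hN
  | cons p L ih =>
    rw [flatMap_cons, append_assoc] at h
    obtain ⟨as, rfl, h'⟩ | ⟨bs, hp, h'⟩ := append_eq_append_iff.mp h
    · exact ih (by rw [h', append_assoc])
    rcases bs.eq_nil_or_concat with rfl | ⟨bs, x, rfl⟩
    · exact ih (L₁ := []) (by simpa using h'.symm)
    rw [concat_eq_append] at hp h'
    have hbs : (bs ++ [x]).length < L₂.length := by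
      have := hlen p
      simp only [hp, length_append, length_singleton] at this ⊢
      omega
    obtain ⟨X, rfl, hX⟩ | ⟨as, has, -⟩ := append_eq_append_iff.mp h'.symm
    · rcases X with _ | ⟨y, X⟩
      · simp at hbs
      rcases L with _ | ⟨q, L⟩
      · simp at hX
      refine ⟨bs, x, y, X, by simp, hbd p q x (by simp [hp]) y ?_⟩
      rw [flatMap_cons] at hX
      simpa [head?_append_of_ne_nil _ (hne q)] using congrArg head? hX
    · simp [has] at hbs

end List

namespace FreeGroup

variable {ι α : Type*}

def letterWord (gen : ι → List (α × Bool)) (p : ι × Bool) : List (α × Bool) :=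
  cond p.2 (gen p.1) (invRev (gen p.1))

theorem lift_mk_eq_mk_flatMap (gen : ι → List (α × Bool)) (L : List (ι × Bool)) :
    lift (fun s => mk (gen s)) (mk L) = mk (L.flatMap (letterWord gen)) := by
  induction L with
  | nil => simp [one_eq_mk]
  | cons p L ih =>
    rw [List.flatMap_cons, ← mul_mk, ← ih, ← List.singleton_append, ← mul_mk, _root_.map_mul]
    rcases p with ⟨s, _ | _⟩ <;> simp [letterWord, inv_mk]

theorem isReduced_flatMap {word : ι × Bool → List (α × Bool)} (hne : ∀ p, word p ≠ [])
    (hred : ∀ p q, IsReduced [p, q] → IsReduced (word p ++ word q)) {L : List (ι × Bool)}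
    (hL : IsReduced L) : IsReduced (L.flatMap word) := by
  induction L with
  | nil => simp
  | cons p L ih =>
    rw [List.flatMap_cons]
    rcases L with _ | ⟨q, L⟩
    · simpa using (hred p p (by simp)).infix ⟨[], word p, rfl⟩
    · rw [isReduced_cons_cons] at hL
      rw [List.flatMap_cons, ← List.append_assoc] at *
      exact (hred p q (by simpa using hL.1)).append_overlap (ih hL.2) (hne q)

def commutatorWord (a b : α) : List (α × Bool) := [(a, true), (b, true), (a, false), (b, false)]

theorem mk_commutatorWord (a b : α) : mk (commutatorWord a b) = ⁅of a, of b⁆ := rfl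

variable [DecidableEq α]

theorem toWord_lift_eq_flatMap [DecidableEq ι] {gen : ι → List (α × Bool)}
    (hne : ∀ s, gen s ≠ [])
    (hred : ∀ p q, IsReduced [p, q] → IsReduced (letterWord gen p ++ letterWord gen q))
    (x : FreeGroup ι) :
    (lift (fun s => mk (gen s)) x).toWord = x.toWord.flatMap (letterWord gen) := by
  conv_lhs => rw [← mk_toWord (x := x)]
  rw [lift_mk_eq_mk_flatMap, toWord_mk]
  refine (isReduced_flatMap ?_ hred isReduced_toWord).reduce_eq
  rintro ⟨s, _ | _⟩ <;> simp [letterWord, invRev, hne s]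

section Cut

variable {H : Subgroup (FreeGroup α)} (Cut : α × Bool → α × Bool → Prop) (N : ℕ)
  (mem_of_cut : ∀ h ∈ H, ∀ L₁ a b L₂, h.toWord = L₁ ++ a :: b :: L₂ → Cut a b →
    mk (L₁ ++ [a]) ∈ H)
  (exists_cut : ∀ h ∈ H, ∀ L₁ L₂ L₃, h.toWord = L₁ ++ L₂ ++ L₃ → N < L₂.length →
    ∃ M₁ a b M₂, L₂ = M₁ ++ a :: b :: M₂ ∧ Cut a b)
include mem_of_cut exists_cut

theorem mem_of_pow_mem_of_cut {g : FreeGroup α} {n : ℕ} (hn : N + 1 < n) (hg : g ^ n ∈ H) :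
    g ∈ H := by
  set c := reduceCyclically.conjugator g.toWord
  set t := reduceCyclically g.toWord
  have hg_eq : g = mk c * mk t * (mk c)⁻¹ := by
    rw [inv_mk, mul_mk, mul_mk, reduceCyclically.conj_conjugator_reduceCyclically, mk_toWord]
  by_cases ht : t = []
  · rw [hg_eq, ht, ← one_eq_mk, mul_one, mul_inv_cancel]
    exact one_mem H
  obtain ⟨k, rfl⟩ : ∃ k, n = k + 1 := ⟨n - 1, by omega⟩
  -- `tᵏ⁺¹ = T t = t T`, so a cut inside `T` shows up at two places `|t|` letters apart.
  set T := (List.replicate k t).flatten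
  have hpow : (g ^ (k + 1)).toWord = c ++ T ++ t ++ invRev c ∧
      (g ^ (k + 1)).toWord = c ++ t ++ T ++ invRev c := by
    rw [toWord_pow, reduceCyclically.reduce_flatten_replicate isReduced_toWord,
      if_neg k.succ_ne_zero]
    constructor
    · rw [List.replicate_succ', List.flatten_append]
      simp only [List.flatten_singleton, List.append_assoc]
      rfl
    · rw [List.replicate_succ, List.flatten_cons]
      simp only [List.append_assoc]
      rfl
  have hT : N < T.length := by
    have : 1 ≤ t.length := List.length_pos_iff.mpr ht
    simp only [T, List.length_flatten, List.map_replicate, List.sum_replicate, smul_eq_mul]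
    nlinarith
  obtain ⟨M₁, a, b, M₂, hM, hab⟩ := exists_cut _ hg c T (t ++ invRev c)
    (by rw [hpow.1]; simp) hT
  have h₁ := mem_of_cut _ hg (c ++ M₁) a b (M₂ ++ t ++ invRev c) (by rw [hpow.1, hM]; simp) hab
  have h₂ := mem_of_cut _ hg (c ++ t ++ M₁) a b (M₂ ++ invRev c) (by rw [hpow.2, hM]; simp) hab
  have : g = mk (c ++ t ++ M₁ ++ [a]) * (mk (c ++ M₁ ++ [a]))⁻¹ := by
    simp only [← mul_mk]
    rw [hg_eq]
    group
  rw [this]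
  exact mul_mem h₂ (inv_mem h₁)

theorem mem_of_zpow_mem_of_cut {g : FreeGroup α} {m : ℤ} (hm : m ≠ 0) (hg : g ^ m ∈ H) :
    g ∈ H := by
  refine mem_of_pow_mem_of_cut Cut N mem_of_cut exists_cut (n := m.natAbs * (N + 2)) ?_ ?_
  · have := Int.natAbs_pos.mpr hm
    nlinarith
  · rw [pow_mul]
    apply pow_mem
    rcases Int.natAbs_eq m with h | h <;> rw [h] at hg
    · rwa [zpow_natCast] at hg
    · rwa [zpow_neg, inv_mem_iff, zpow_natCast] at hg

end Cut

theorem mem_range_lift_of_zpow_mem [DecidableEq ι] {gen : ι → List (α × Bool)}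
    (Cut : α × Bool → α × Bool → Prop) (N : ℕ) (hne : ∀ s, gen s ≠ [])
    (hred : ∀ p q, IsReduced [p, q] → IsReduced (letterWord gen p ++ letterWord gen q))
    (hlen : ∀ p, (letterWord gen p).length ≤ N)
    (hin : ∀ p, (letterWord gen p).IsChain (fun a b => ¬ Cut a b))
    (hbd : ∀ p q, ∀ a ∈ (letterWord gen p).getLast?, ∀ b ∈ (letterWord gen q).head?, Cut a b)
    {g : FreeGroup α} {m : ℤ} (hm : m ≠ 0) (hg : g ^ m ∈ (lift fun s => mk (gen s)).range) :
    g ∈ (lift fun s => mk (gen s)).range := by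
  refine mem_of_zpow_mem_of_cut Cut N ?_ ?_ hm hg
  · rintro _ ⟨x, rfl⟩ L₁ a b L₂ h hab
    rw [toWord_lift_eq_flatMap hne hred] at h
    obtain ⟨L', hL'⟩ := List.exists_flatMap_eq_of_rel hin h hab
    exact ⟨mk L', by rw [lift_mk_eq_mk_flatMap, hL']⟩
  · rintro _ ⟨x, rfl⟩ L₁ L₂ L₃ h hN
    rw [toWord_lift_eq_flatMap hne hred] at h
    refine List.exists_rel_of_flatMap_eq_append ?_ hlen hbd h hN
    rintro ⟨s, _ | _⟩ <;> simp [letterWord, invRev, hne s]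

end FreeGroup

namespace RootClosedSubgroup

open FreeGroup

variable {i : ℕ}

def gen (i : ℕ) : Fin 3 ⊕ Fin (i + 1) → List (Fin (2 * i + 5) × Bool)
  | .inl k => [(⟨k, by omega⟩, true)]
  | .inr j => commutatorWord ⟨2 * j + 3, by omega⟩ ⟨2 * j + 4, by omega⟩

def IsCut (a b : Fin (2 * i + 5) × Bool) : Prop :=
  ((a.1 : ℕ) < 3 ∨ a.2 = false) ∧ ((b.1 : ℕ) < 3 ∨ b.2 = true)

theorem gen_ne_nil (s : Fin 3 ⊕ Fin (i + 1)) : gen i s ≠ [] := by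
  cases s <;> simp [gen, commutatorWord]

theorem isReduced_letterWord_append (p q : (Fin 3 ⊕ Fin (i + 1)) × Bool) (h : IsReduced [p, q]) :
    IsReduced (letterWord (gen i) p ++ letterWord (gen i) q) := by
  rcases p with ⟨s | s, _ | _⟩ <;> rcases q with ⟨t | t, _ | _⟩ <;>
    simp [letterWord, gen, commutatorWord, invRev, Fin.ext_iff] at h ⊢ <;> omega

theorem length_letterWord_le (p : (Fin 3 ⊕ Fin (i + 1)) × Bool) :
    (letterWord (gen i) p).length ≤ 4 := by
  rcases p with ⟨s | s, _ | _⟩ <;> simp [letterWord, gen, commutatorWord, invRev]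

theorem isChain_letterWord (p : (Fin 3 ⊕ Fin (i + 1)) × Bool) :
    (letterWord (gen i) p).IsChain (fun a b => ¬ IsCut a b) := by
  rcases p with ⟨s | s, _ | _⟩ <;> simp [letterWord, gen, commutatorWord, invRev, IsCut]

theorem isCut_getLast_head (p q : (Fin 3 ⊕ Fin (i + 1)) × Bool) :
    ∀ a ∈ (letterWord (gen i) p).getLast?, ∀ b ∈ (letterWord (gen i) q).head?, IsCut a b := by
  rcases p with ⟨s | s, _ | _⟩ <;> rcases q with ⟨t | t, _ | _⟩ <;>
    simp [letterWord, gen, commutatorWord, invRev, IsCut]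

theorem range_mk_gen (e : ℕ → FreeGroup (Fin (2 * i + 5)))
    (he : ∀ m (h₁ : 1 ≤ m) (h₂ : m ≤ 2 * i + 5), e m = of ⟨m - 1, Nat.sub_one_lt_of_le h₁ h₂⟩) :
    Set.range (fun s => mk (gen i s)) =
      {e 1, e 2, e 3} ∪ (fun j => ⁅e (2 * j + 2), e (2 * j + 3)⁆) '' Set.Icc 1 (i + 1) := by
  ext x
  simp only [Set.mem_range, Sum.exists, gen, mk_commutatorWord, Set.mem_union, Set.mem_image,
    Set.mem_Icc]
  refine or_congr ?_ ⟨?_, ?_⟩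
  · rw [he 1 (by omega) (by omega), he 2 (by omega) (by omega), he 3 (by omega) (by omega)]
    simp [Fin.exists_fin_succ, eq_comm]
    rfl
  · rintro ⟨j, rfl⟩
    refine ⟨j + 1, ⟨by omega, by omega⟩, ?_⟩
    rw [he _ (by omega) (by omega), he _ (by omega) (by omega)]
    congr 3
  · rintro ⟨j, ⟨hj₁, hj₂⟩, rfl⟩
    refine ⟨⟨j - 1, by omega⟩, ?_⟩
    rw [he _ (by omega) (by omega), he _ (by omega) (by omega)]
    congr 3 <;> simp <;> omega

end RootClosedSubgroup

/-- In `F_{2i+5}`, the subgroup `A = ⟨e₁,e₂,e₃,⁅e₄,e₅⁆,…,⁅e_{2i+4},e_{2i+5}⁆⟩` is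
root-closed: if `g^m ∈ A` for some nonzero integer `m`, then `g ∈ A`. -/
theorem statement6 (i : ℕ)
    (e : ℕ → FreeGroup (Fin (2 * i + 5)))
    (he : ∀ m (_ : 1 ≤ m) (_ : m ≤ 2 * i + 5), e m = FreeGroup.of ⟨m - 1, by omega⟩)
    (A : Subgroup (FreeGroup (Fin (2 * i + 5))))
    (hA : A = Subgroup.closure
      ({e 1, e 2, e 3} ∪ (fun j => ⁅e (2 * j + 2), e (2 * j + 3)⁆) '' Set.Icc 1 (i + 1)))
    (g : FreeGroup (Fin (2 * i + 5))) (m : ℤ) (hm : m ≠ 0) (hgm : g ^ m ∈ A) :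
    g ∈ A := by
  rw [hA, ← RootClosedSubgroup.range_mk_gen e he, ← FreeGroup.range_lift_eq_closure] at hgm ⊢
  exact FreeGroup.mem_range_lift_of_zpow_mem RootClosedSubgroup.IsCut 4
    RootClosedSubgroup.gen_ne_nil RootClosedSubgroup.isReduced_letterWord_append
    RootClosedSubgroup.length_letterWord_le RootClosedSubgroup.isChain_letterWord
    RootClosedSubgroup.isCut_getLast_head hm hgm
end

section
/- Let α be a type and S ⊆ α a subset. The subgroup of FreeGroup α generated by {FreeGroup.of s : s ∈ S} (a free factor of FreeGroup α corresponding to a subset of the basis) is root-closed: for every g ∈ FreeGroup α and every integer m ≠ 0, if g^m ∈ Subgroup.closure (FreeGroup.of '' S) then g ∈ Subgroup.closure (FreeGroup.of '' S). -/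
/-!
Killing the generators outside `S` is a retraction `ρ` of `FreeGroup α` onto
`⟨of '' S⟩`. If `g ^ m ∈ ⟨of '' S⟩` then `ρ g ^ m = ρ (g ^ m) = g ^ m`, and since roots are unique
in the torsion-free group `FreeGroup α`, `g = ρ g` lies in `⟨of '' S⟩`.
-/

namespace Subgroup

variable {G : Type*} [Group G]

def IsRootClosed (H : Subgroup G) : Prop :=
  ∀ ⦃g : G⦄ ⦃m : ℤ⦄, m ≠ 0 → g ^ m ∈ H → g ∈ H

theorem isRootClosed_of_retraction [IsMulTorsionFree G] {H : Subgroup G} (ρ : G →* G)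
    (hrange : ρ.range ≤ H) (hfix : ∀ x ∈ H, ρ x = x) : H.IsRootClosed := by
  intro g m hm hg
  have hρg : ρ g = g := zpow_left_injective hm (by simpa only [map_zpow] using hfix _ hg)
  exact hρg ▸ hrange ⟨g, rfl⟩

end Subgroup

namespace FreeGroup

variable {α : Type*}

noncomputable def retraction (S : Set α) : FreeGroup α →* FreeGroup α :=
  lift (S.mulIndicator of)

theorem range_retraction_le (S : Set α) :
    (retraction S).range ≤ Subgroup.closure (of '' S) := by
  refine range_lift_le ?_
  rintro _ ⟨a, rfl⟩
  by_cases ha : a ∈ S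
  · exact Subgroup.subset_closure ⟨a, ha, (Set.mulIndicator_of_mem ha _).symm⟩
  · rw [Set.mulIndicator_of_notMem ha]
    exact (Subgroup.closure (of '' S)).one_mem

theorem retraction_eq_self_of_mem_closure (S : Set α) {x : FreeGroup α}
    (hx : x ∈ Subgroup.closure (of '' S)) : retraction S x = x := by
  refine MonoidHom.eqOn_closure (f := retraction S) (g := MonoidHom.id _) ?_ hx
  rintro _ ⟨a, ha, rfl⟩
  simp [retraction, Set.mulIndicator_of_mem ha]

theorem isRootClosed_closure_image_of (S : Set α) :
    (Subgroup.closure (of '' S)).IsRootClosed :=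
  Subgroup.isRootClosed_of_retraction (retraction S) (range_retraction_le S)
    fun _ => retraction_eq_self_of_mem_closure S

end FreeGroup

/-- A free factor of a free group spanned by a subset of the basis is root-closed:
if `g^m ∈ ⟨of s : s ∈ S⟩` for a nonzero integer `m`, then `g ∈ ⟨of s : s ∈ S⟩`. -/
theorem statement8 {α : Type*} (S : Set α) (g : FreeGroup α) (m : ℤ) (hm : m ≠ 0)
    (hgm : g ^ m ∈ Subgroup.closure (FreeGroup.of '' S)) :
    g ∈ Subgroup.closure (FreeGroup.of '' S) :=
  FreeGroup.isRootClosed_closure_image_of S hm hgm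
end

section
/- Fix n ∈ ℕ and work in the free group F_{n+1} = FreeGroup (Fin (n+1)) with free generators e_1, …, e_{n+1}. Let H := Subgroup.closure {e_1, …, e_n} (the canonical copy of F_n), and let b ∈ H with b ≠ 1. Define the endomorphism φ : F_{n+1} → F_{n+1} by φ = FreeGroup.lift f, where f e_j = e_j for 1 ≤ j ≤ n and f e_{n+1} = b⁻¹ · e_{n+1} · b. Then φ is bijective (hence an automorphism of F_{n+1}), and for every c ∈ F_{n+1} with c ∉ H, the orbit { φ^[l] c : l ∈ ℕ } of c under iterates of φ is an infinite set. -/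
/-!
Identify `F_{n+1}` with the HNN extension of `F_n` with trivial associated subgroups, the last
generator being the stable letter `t`. Then `φ` becomes `twist b`, the endomorphism fixing `F_n`
and sending `t ↦ b⁻¹ t b`. These satisfy `twist α ∘ twist β = twist (α β)`, so `twist b` is
invertible and its `k`-th iterate is `twist (b ^ k)`, where `b ^ k ≠ 1` as free groups are
torsion-free. Finally `twist β` with `β ≠ 1` fixes no `x` outside `F_n`: if `x` has the reduced
word `g₀ t^ε₁ g₁ ⋯ t^εₖ gₖ` with `k ≥ 1`, then `x β⁻¹` and `twist β x β⁻¹` have reduced words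
with the same pattern of `t`'s but with heads `g₀` and `g₀ β⁻¹`, so by uniqueness of normal forms
they are different elements.
-/

open Function

theorem Function.Semiconj.range_iterate_eq_image {α β : Type*} {f : α → β} {ga : α → α}
    {gb : β → β} (h : Semiconj f ga gb) (x : α) :
    (Set.range fun k => gb^[k] (f x)) = f '' Set.range fun k => ga^[k] x := by
  rw [← Set.range_comp]
  exact congrArg Set.range (funext fun k => ((h.iterate_right k) x).symm)

theorem Function.Injective.infinite_range_iterate {α : Type*} {f : α → α} (hf : Injective f)
    {x : α} (hx : x ∉ periodicPts f) : (Set.range fun k => f^[k] x).Infinite := by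
  refine Set.infinite_range_of_injective fun m n hmn => ?_
  by_contra hne
  rcases lt_or_gt_of_ne hne with hlt | hlt
  · exact hx (mk_mem_periodicPts (by lia) (iterate_cancel hf hmn.symm))
  · exact hx (mk_mem_periodicPts (by lia) (iterate_cancel hf hmn))

namespace HNNExtension

section

variable {G : Type*} [Group G] {A B : Subgroup G} {φ : A ≃* B}

theorem NormalWord.ReducedWord.exists_prod_eq (x : HNNExtension G A B φ) :
    ∃ w : NormalWord.ReducedWord G A B, w.prod φ = x := by
  obtain ⟨d⟩ := NormalWord.TransversalPair.nonempty G A B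
  exact ⟨(NormalWord.equiv φ d x).toReducedWord, (NormalWord.equiv φ d).symm_apply_apply x⟩

theorem NormalWord.ReducedWord.exists_prod_eq_mul_of (w : NormalWord.ReducedWord G A B)
    (hw : w.toList ≠ []) (γ : G) :
    ∃ w' : NormalWord.ReducedWord G A B, w'.head = w.head ∧
      w'.toList.map Prod.fst = w.toList.map Prod.fst ∧ w'.prod φ = w.prod φ * of γ := by
  obtain ⟨head, toList, chain⟩ := w
  obtain ⟨L, ⟨u, g⟩, rfl⟩ := (List.eq_nil_or_concat' toList).resolve_left hw
  refine ⟨⟨head, L ++ [(u, g * γ)], chain.left_of_append.append (List.isChain_singleton _) ?_⟩,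
    rfl, by simp, by simp [ReducedWord.prod, mul_assoc]⟩
  rintro x hx _ ⟨⟩
  exact (List.isChain_append.mp chain).2.2 x hx (u, g) rfl

@[simp]
theorem toSubgroup_bot (u : ℤˣ) : toSubgroup (⊥ : Subgroup G) ⊥ u = ⊥ := by
  unfold toSubgroup; split_ifs <;> rfl

end

section

variable {G : Type*} [Group G] {φ : (⊥ : Subgroup G) ≃* (⊥ : Subgroup G)}

def twist (β : G) : HNNExtension G ⊥ ⊥ φ →* HNNExtension G ⊥ ⊥ φ :=
  lift of (of β⁻¹ * t * of β) fun a => by simp [Subsingleton.elim a 1]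

@[simp] theorem twist_of (β g : G) : (twist (φ := φ) β) (of g) = of g := lift_of ..

@[simp] theorem twist_t (β : G) : (twist (φ := φ) β) t = of β⁻¹ * t * of β := lift_t ..

theorem twist_mul (α β : G) : twist (φ := φ) (α * β) = (twist α).comp (twist β) := by
  ext <;> simp [mul_assoc]

theorem twist_one : twist (φ := φ) 1 = MonoidHom.id _ := by
  ext <;> simp

theorem twist_list_prod (β : G) (L : List (ℤˣ × G)) :
    twist β ((L.map fun p => t ^ (p.1 : ℤ) * of p.2 : List (HNNExtension G ⊥ ⊥ φ)).prod) =
      of β⁻¹ * (((L.map fun p => (p.1, β * p.2 * β⁻¹)).map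
        fun p => t ^ (p.1 : ℤ) * of p.2).prod) * of β := by
  induction L with
  | nil => simp
  | cons p L ih =>
    have hconj : (of β⁻¹ * t * of β : HNNExtension G ⊥ ⊥ φ) ^ (p.1 : ℤ) =
        of β⁻¹ * t ^ (p.1 : ℤ) * of β := by
      simpa using conj_zpow (a := (of β⁻¹ : HNNExtension G ⊥ ⊥ φ)) (b := t) (i := p.1)
    simp only [List.map_cons, List.prod_cons, map_mul, map_zpow, twist_t, twist_of, ih, hconj]
    simp [mul_assoc]

theorem NormalWord.ReducedWord.exists_prod_eq_twist_mul (w : NormalWord.ReducedWord G ⊥ ⊥) (β : G) :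
    ∃ w' : NormalWord.ReducedWord G ⊥ ⊥, w'.head = w.head * β⁻¹ ∧
      w'.toList.map Prod.fst = w.toList.map Prod.fst ∧
      w'.prod φ = twist β (w.prod φ) * of β⁻¹ := by
  refine ⟨⟨w.head * β⁻¹, w.toList.map fun p => (p.1, β * p.2 * β⁻¹), ?_⟩, rfl, by simp, ?_⟩
  · refine (List.isChain_map _).mpr (w.chain.imp fun a b hab ha => hab ?_)
    simpa using ha
  · simp only [ReducedWord.prod, map_mul, twist_of, twist_list_prod]
    simp [mul_assoc]

theorem mem_range_of_twist_apply_eq_self {β : G} (hβ : β ≠ 1) {x : HNNExtension G ⊥ ⊥ φ}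
    (hx : twist β x = x) : x ∈ (of : G →* HNNExtension G ⊥ ⊥ φ).range := by
  obtain ⟨w, rfl⟩ := NormalWord.ReducedWord.exists_prod_eq x
  by_cases hw : w.toList = []
  · exact ⟨w.head, by simp [NormalWord.ReducedWord.prod, hw]⟩
  obtain ⟨w₁, hhead₁, hfst₁, hprod₁⟩ := w.exists_prod_eq_mul_of (φ := φ) hw β⁻¹
  obtain ⟨w₂, hhead₂, hfst₂, hprod₂⟩ := w.exists_prod_eq_twist_mul (φ := φ) β
  obtain ⟨p, L, hpL⟩ := List.exists_cons_of_ne_nil hw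
  have hheads := (ReducedWord.map_fst_eq_and_of_prod_eq φ
    (hprod₁.trans (hx ▸ hprod₂.symm))).2 p.1 (by simp [← List.head?_map, hfst₁, hpL])
  simp [hhead₁, hhead₂] at hheads
  exact absurd hheads hβ

theorem iterate_twist (β : G) (k : ℕ) : (⇑(twist (φ := φ) β))^[k] = twist (β ^ k) := by
  induction k with
  | zero => rw [iterate_zero, pow_zero, twist_one]; rfl
  | succ k ih => rw [iterate_succ', ih, pow_succ', twist_mul]; rfl

theorem twist_bijective (β : G) : Bijective (twist (φ := φ) β) := by
  have hinv : ∀ γ : G, LeftInverse (twist (φ := φ) γ⁻¹) (twist γ) := fun γ x => by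
    rw [← MonoidHom.comp_apply, ← twist_mul, inv_mul_cancel, twist_one, MonoidHom.id_apply]
  have hright := hinv β⁻¹
  rw [inv_inv] at hright
  exact bijective_iff_has_inverse.mpr ⟨twist β⁻¹, hinv β, hright⟩

theorem infinite_range_iterate_twist [IsMulTorsionFree G] {β : G} (hβ : β ≠ 1)
    {x : HNNExtension G ⊥ ⊥ φ} (hx : x ∉ (of : G →* HNNExtension G ⊥ ⊥ φ).range) :
    (Set.range fun k => (twist β)^[k] x).Infinite := by
  refine (twist_bijective β).injective.infinite_range_iterate fun hper => hx ?_
  obtain ⟨k, hk, hkx⟩ := mem_periodicPts.mp hper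
  rw [IsPeriodicPt, IsFixedPt, iterate_twist] at hkx
  exact mem_range_of_twist_apply_eq_self ((pow_eq_one_iff_left hk.ne').not.mpr hβ) hkx

end

end HNNExtension

namespace FreeGroup

open HNNExtension

variable {n : ℕ} {φ : (⊥ : Subgroup (FreeGroup (Fin n))) ≃* (⊥ : Subgroup (FreeGroup (Fin n)))}

noncomputable def hnnExtensionEquiv :
    HNNExtension (FreeGroup (Fin n)) ⊥ ⊥ φ ≃* FreeGroup (Fin (n + 1)) :=
  MonoidHom.toMulEquiv
    (HNNExtension.lift (map Fin.castSucc) (of (Fin.last n)) fun a => by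
      simp [Subsingleton.elim a 1])
    (FreeGroup.lift (Fin.lastCases t fun i => HNNExtension.of (of i)))
    (by ext <;> simp)
    (by ext j; induction j using Fin.lastCases <;> simp)

@[simp] theorem hnnExtensionEquiv_of (g : FreeGroup (Fin n)) :
    hnnExtensionEquiv (φ := φ) (HNNExtension.of g) = map Fin.castSucc g := by
  simp [hnnExtensionEquiv]

@[simp] theorem hnnExtensionEquiv_t : hnnExtensionEquiv (φ := φ) t = of (Fin.last n) := by
  simp [hnnExtensionEquiv]

theorem range_map_castSucc :
    (map (Fin.castSucc : Fin n → Fin (n + 1))).range =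
      Subgroup.closure (of '' {j : Fin (n + 1) | j ≠ Fin.last n}) := by
  rw [range_map, Fin.range_castSucc]
  congr 2
  ext j
  simp [Fin.ext_iff, Nat.lt_iff_le_and_ne, Nat.le_of_lt_succ j.is_lt]

theorem map_hnnExtensionEquiv_range_of :
    (HNNExtension.of : FreeGroup (Fin n) →* HNNExtension _ ⊥ ⊥ φ).range.map
      hnnExtensionEquiv.toMonoidHom = (map Fin.castSucc).range := by
  rw [MonoidHom.map_range]
  congr 1

theorem semiconj_hnnExtensionEquiv_twist {β : FreeGroup (Fin n)}
    {f : Fin (n + 1) → FreeGroup (Fin (n + 1))}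
    (hfj : ∀ j : Fin (n + 1), j ≠ Fin.last n → f j = of j)
    (hfn : f (Fin.last n) = (map Fin.castSucc β)⁻¹ * of (Fin.last n) * map Fin.castSucc β) :
    Semiconj (hnnExtensionEquiv (φ := φ)) (twist β) (FreeGroup.lift f) := by
  suffices h : (FreeGroup.lift f).comp hnnExtensionEquiv.toMonoidHom =
      (hnnExtensionEquiv (φ := φ)).toMonoidHom.comp (twist β) from
    fun x => (DFunLike.congr_fun h x).symm
  ext i
  · simp [hfj _ (Fin.castSucc_ne_last i)]
  · simp [hfn]

end FreeGroup

/-- In `F_{n+1}` with `H = ⟨e₁,…,e_n⟩` the canonical copy of `F_n` and `b ∈ H`, `b ≠ 1`: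
the endomorphism `φ` with `φ e_j = e_j` for `j ≤ n` and `φ e_{n+1} = b⁻¹ e_{n+1} b` is an
automorphism, and every `c ∉ H` has infinite orbit under the iterates of `φ`. -/
theorem statement18 (n : ℕ)
    (H : Subgroup (FreeGroup (Fin (n + 1))))
    (hH : H = Subgroup.closure (FreeGroup.of '' {j : Fin (n + 1) | j ≠ Fin.last n}))
    (b : FreeGroup (Fin (n + 1))) (hbH : b ∈ H) (hb : b ≠ 1)
    (f : Fin (n + 1) → FreeGroup (Fin (n + 1)))
    (hfj : ∀ j : Fin (n + 1), j ≠ Fin.last n → f j = FreeGroup.of j)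
    (hfn : f (Fin.last n) = b⁻¹ * FreeGroup.of (Fin.last n) * b) :
    Function.Bijective ⇑(FreeGroup.lift f : FreeGroup (Fin (n + 1)) →* FreeGroup (Fin (n + 1))) ∧
    ∀ c : FreeGroup (Fin (n + 1)), c ∉ H →
      Set.Infinite {x : FreeGroup (Fin (n + 1)) | ∃ l : ℕ, x = (⇑(FreeGroup.lift f))^[l] c} := by
  subst hH
  rw [← FreeGroup.range_map_castSucc] at hbH ⊢
  obtain ⟨β, rfl⟩ := hbH
  have hβ : β ≠ 1 := by rintro rfl; exact hb (map_one _)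
  let e := FreeGroup.hnnExtensionEquiv (n := n) (φ := MulEquiv.refl _)
  have hconj : Semiconj e (HNNExtension.twist β) (FreeGroup.lift f) :=
    FreeGroup.semiconj_hnnExtensionEquiv_twist hfj hfn
  refine ⟨(Bijective.of_comp_iff _ e.bijective).mp
    (hconj.comp_eq ▸ e.bijective.comp (HNNExtension.twist_bijective β)), fun c hc => ?_⟩
  rw [← FreeGroup.map_hnnExtensionEquiv_range_of (φ := MulEquiv.refl _), Subgroup.mem_map_equiv]
    at hc
  have horbit := hconj.range_iterate_eq_image (e.symm c)
  rw [e.apply_symm_apply] at horbit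
  convert (HNNExtension.infinite_range_iterate_twist hβ hc).image e.injective.injOn
  rw [← horbit]
  exact Set.ext fun x => exists_congr fun l => eq_comm
end
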